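/- Every eigenvalue of the Hermitian positive semidefinite matrix R Σ R* is at most λ_{q+1}(Σ)/μ_q; in particular, its largest eigenvalue is bounded by the ratio of the (q+1)-th largest eigenvalue of Σ to the q-th largest eigenvalue of its m×m top-left submatrix. -/

import Mathlib

open Matrix ComplexOrder

/-- The `j`-th largest eigenvalue (1-indexed) of a Hermitian complex matrix
(junk value otherwise). -/
noncomputable def eigJ {n : ℕ} (A : Matrix (Fin n) (Fin n) ℂ) (j : ℕ) : ℝ :=
  if hA : A.IsHermitian then
    ((Finset.univ.val.map hA.eigenvalues).sort (· ≤ ·)).getD (n - j) 0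
  else 0

open scoped MatrixOrder

/-!
Write `R = B Q* Q` with `B = C Λ^{-1/2} P̃`. Then `R Σ R* = (B Q*) (Q Σ Q*) (B Q*)*`, and
`Q Σ Q* = diag(λ_{q+1}, …, λ_n) ≤ λ_{q+1}`, so in the Loewner order
`R Σ R* ≤ λ_{q+1} B (Q* Q) B* ≤ λ_{q+1} B B*`, as `Q* Q` is an orthogonal projection.
Since `P̃` has orthonormal rows, `B B* = C Λ^{-1} C* ≤ μ_q⁻¹ C C* = μ_q⁻¹`, and a Loewner bound
`c • 1` bounds every eigenvalue by `c`.
-/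

theorem exists_eigenvalues_eq_eigJ {n : ℕ} {A : Matrix (Fin n) (Fin n) ℂ} (hA : A.IsHermitian)
    {j : ℕ} (h1 : 1 ≤ j) (h2 : j ≤ n) : ∃ i, hA.eigenvalues i = eigJ A j := by
  rw [eigJ, dif_pos hA]
  set l := (Finset.univ.val.map hA.eigenvalues).sort (· ≤ ·)
  have hlt : n - j < l.length := by simp [l]; omega
  obtain ⟨i, -, hi⟩ := Multiset.mem_map.mp ((Multiset.mem_sort _).mp (List.getElem_mem hlt))
  exact ⟨i, by rw [hi, List.getD_eq_getElem l 0 hlt]⟩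

theorem eigJ_antitone {n : ℕ} {A : Matrix (Fin n) (Fin n) ℂ} (hA : A.IsHermitian) {j k : ℕ}
    (h1 : 1 ≤ j) (hjk : j ≤ k) (h2 : k ≤ n) : eigJ A k ≤ eigJ A j := by
  rw [eigJ, dif_pos hA, eigJ, dif_pos hA]
  set l := (Finset.univ.val.map hA.eigenvalues).sort (· ≤ ·)
  have hltk : n - k < l.length := by simp [l]; omega
  have hltj : n - j < l.length := by simp [l]; omega
  rw [List.getD_eq_getElem l 0 hltk, List.getD_eq_getElem l 0 hltj]
  exact (Multiset.pairwise_sort _ _).rel_get_of_le (a := ⟨n - k, hltk⟩) (b := ⟨n - j, hltj⟩)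
    (Fin.mk_le_mk.2 (by omega))

theorem eigJ_nonneg {n : ℕ} {A : Matrix (Fin n) (Fin n) ℂ} (hA : A.PosSemidef) {j : ℕ}
    (h1 : 1 ≤ j) (h2 : j ≤ n) : 0 ≤ eigJ A j := by
  obtain ⟨i, hi⟩ := exists_eigenvalues_eq_eigJ hA.1 h1 h2
  exact hi ▸ hA.eigenvalues_nonneg i

namespace Matrix

variable {𝕜 : Type*} [RCLike 𝕜] {k l n : Type*}

theorem diagonal_ofReal_le_smul_one [DecidableEq n] {d : n → ℝ} {c : ℝ} (h : ∀ i, d i ≤ c) :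
    diagonal (fun i => (d i : 𝕜)) ≤ c • 1 := by
  have hc : (c • 1 : Matrix n n 𝕜) = diagonal fun _ => (c : 𝕜) := by
    rw [← smul_one_eq_diagonal, ← RCLike.real_smul_eq_coe_smul (K := 𝕜)]
  rw [le_iff, hc, diagonal_sub, posSemidef_diagonal_iff]
  intro i
  rw [← RCLike.ofReal_sub, RCLike.ofReal_nonneg]
  exact sub_nonneg.2 (h i)

variable [Fintype n]

theorem IsHermitian.eigenvalues_le_of_le_smul_one [DecidableEq n] {A : Matrix n n 𝕜}
    (hA : A.IsHermitian) {c : ℝ} (h : A ≤ c • 1) (i : n) : hA.eigenvalues i ≤ c := by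
  rw [← Algebra.algebraMap_eq_smul_one] at h
  exact (le_algebraMap_iff_spectrum_le hA.isSelfAdjoint).1 h _
    (hA.eigenvalues_mem_spectrum_real i)

theorem mul_mul_conjTranspose_le_mul_mul_conjTranspose [Fintype k] {A B : Matrix n n 𝕜}
    (h : A ≤ B) (X : Matrix k n 𝕜) : X * A * Xᴴ ≤ X * B * Xᴴ := by
  rw [le_iff, ← Matrix.sub_mul, ← Matrix.mul_sub]
  exact (le_iff.1 h).mul_mul_conjTranspose_same X

theorem conjTranspose_mul_self_le_one [Fintype k] [DecidableEq k] [DecidableEq n]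
    {Q : Matrix k n 𝕜} (hQ : Q * Qᴴ = 1) : Qᴴ * Q ≤ 1 := by
  have hidem : (Qᴴ * Q) * (Qᴴ * Q) = Qᴴ * Q := by
    rw [Matrix.mul_assoc, ← Matrix.mul_assoc Q, hQ, Matrix.one_mul]
  have hsq : (1 - Qᴴ * Q)ᴴ * (1 - Qᴴ * Q) = 1 - Qᴴ * Q := by
    rw [conjTranspose_sub, conjTranspose_one, conjTranspose_mul, conjTranspose_conjTranspose,
      Matrix.sub_mul, Matrix.mul_sub, Matrix.mul_sub, hidem]
    simp
  rw [le_iff, ← hsq]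
  exact posSemidef_conjTranspose_mul_self _

theorem diagonal_ofReal_mul_conjTranspose [DecidableEq n] (d : n → ℝ) :
    diagonal (fun i => (d i : 𝕜)) * (diagonal fun i => (d i : 𝕜))ᴴ =
      diagonal fun i => ((d i ^ 2 : ℝ) : 𝕜) := by
  rw [diagonal_conjTranspose, diagonal_mul_diagonal]
  congr 1
  ext i
  simp [sq]

theorem of_star_mul_mul_conjTranspose (v : k → n → 𝕜) (M : Matrix n n 𝕜) :
    of (fun j i => star (v j i)) * M * (of fun j i => star (v j i))ᴴ =
      of fun j j' => star (v j) ⬝ᵥ M *ᵥ v j' := by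
  ext j j'
  simp only [mul_apply, of_apply, conjTranspose_apply, star_star, dotProduct, mulVec,
    Pi.star_apply, Finset.mul_sum, Finset.sum_mul, mul_assoc]
  exact Finset.sum_comm

theorem of_star_mul_conjTranspose_eq_one [DecidableEq k] [DecidableEq n] {v : k → n → 𝕜}
    (hv : ∀ j j', star (v j) ⬝ᵥ v j' = if j = j' then 1 else 0) :
    of (fun j i => star (v j i)) * (of fun j i => star (v j i))ᴴ = 1 := by
  have h := of_star_mul_mul_conjTranspose v 1
  rw [Matrix.mul_one] at h
  rw [h]
  ext j j'
  simp [hv, one_apply]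

theorem of_star_mul_mul_conjTranspose_eq_diagonal [DecidableEq k] {v : k → n → 𝕜}
    (hv : ∀ j j', star (v j) ⬝ᵥ v j' = if j = j' then 1 else 0) {M : Matrix n n 𝕜} {d : k → 𝕜}
    (hM : ∀ j, M *ᵥ v j = d j • v j) :
    of (fun j i => star (v j i)) * M * (of fun j i => star (v j i))ᴴ = diagonal d := by
  rw [of_star_mul_mul_conjTranspose]
  ext j j'
  rw [of_apply, hM, dotProduct_smul, hv, diagonal_apply]
  split_ifs with h <;> simp [h]

def padZeroCols {m : ℕ} (n : ℕ) (P : Matrix k (Fin m) 𝕜) : Matrix k (Fin n) 𝕜 :=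
  of fun j i => if h : (i : ℕ) < m then P j ⟨i, h⟩ else 0

theorem padZeroCols_mul_conjTranspose {m n : ℕ} (hmn : m ≤ n) (P : Matrix k (Fin m) 𝕜) :
    padZeroCols n P * (padZeroCols n P)ᴴ = P * Pᴴ := by
  ext j j'
  refine (Fintype.sum_of_injective (Fin.castLE hmn) (Fin.castLE_injective hmn) _ _
    (fun i hi => ?_) (fun i => ?_)).symm
  · have hi' : ¬ (i : ℕ) < m := fun h => hi ⟨⟨i, h⟩, rfl⟩
    simp [padZeroCols, hi']
  · simp [padZeroCols]

theorem mul_mul_conjTranspose_le_smul_one [Fintype k] [DecidableEq k] [Fintype l] [DecidableEq l]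
    [DecidableEq n] {C L : Matrix k k 𝕜} {P : Matrix k n 𝕜} {Q : Matrix l n 𝕜} {S : Matrix n n 𝕜}
    {a b : ℝ} (hC : C * Cᴴ = 1) (hL : L * Lᴴ ≤ b • 1) (hP : P * Pᴴ = 1) (hQ : Q * Qᴴ = 1)
    (ha : 0 ≤ a) (hS : Q * S * Qᴴ ≤ a • 1) :
    C * L * P * Qᴴ * Q * S * (C * L * P * Qᴴ * Q)ᴴ ≤ (a * b) • 1 := by
  set B := C * L * P
  calc C * L * P * Qᴴ * Q * S * (C * L * P * Qᴴ * Q)ᴴ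
      = (B * Qᴴ) * (Q * S * Qᴴ) * (B * Qᴴ)ᴴ := by
        simp only [B, conjTranspose_mul, conjTranspose_conjTranspose, Matrix.mul_assoc]
    _ ≤ (B * Qᴴ) * (a • 1) * (B * Qᴴ)ᴴ := mul_mul_conjTranspose_le_mul_mul_conjTranspose hS _
    _ = a • (B * (Qᴴ * Q) * Bᴴ) := by
        simp only [conjTranspose_mul, conjTranspose_conjTranspose, Matrix.mul_smul,
          Matrix.smul_mul, Matrix.mul_one, Matrix.mul_assoc]
    _ ≤ a • (B * 1 * Bᴴ) := smul_le_smul_of_nonneg_left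
        (mul_mul_conjTranspose_le_mul_mul_conjTranspose (conjTranspose_mul_self_le_one hQ) B) ha
    _ = a • (C * (L * Lᴴ) * Cᴴ) := by
        simp only [B, conjTranspose_mul, Matrix.mul_one, Matrix.mul_assoc]
        rw [← Matrix.mul_assoc P, hP, Matrix.one_mul]
    _ ≤ a • (C * (b • 1) * Cᴴ) :=
        smul_le_smul_of_nonneg_left (mul_mul_conjTranspose_le_mul_mul_conjTranspose hL C) ha
    _ = (a * b) • 1 := by
        rw [Matrix.mul_smul, Matrix.smul_mul, Matrix.mul_one, hC, smul_smul]

end Matrix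

theorem eigJ_le_of_le_smul_one {n : ℕ} {A : Matrix (Fin n) (Fin n) ℂ} (hA : A.IsHermitian)
    {c : ℝ} (h : A ≤ c • 1) {j : ℕ} (h1 : 1 ≤ j) (h2 : j ≤ n) : eigJ A j ≤ c := by
  obtain ⟨i, hi⟩ := exists_eigenvalues_eq_eigJ hA h1 h2
  exact hi ▸ hA.eigenvalues_le_of_le_smul_one h i

theorem stmt_13_general {q m n : ℕ} (hqm : q ≤ m) (hmn : m ≤ n) (hqn : q < n)
    (S : Matrix (Fin n) (Fin n) ℂ) (hS : S.PosSemidef)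
    (Sm : Matrix (Fin m) (Fin m) ℂ)
    (hSm : Sm = S.submatrix (Fin.castLE hmn) (Fin.castLE hmn))
    (hμq : 0 < eigJ Sm q)
    (u : Fin q → Fin m → ℂ)
    (hu_orth : ∀ j k, star (u j) ⬝ᵥ u k = if j = k then 1 else 0)
    (w : Fin (n - q) → Fin n → ℂ)
    (hw_orth : ∀ j k, star (w j) ⬝ᵥ w k = if j = k then 1 else 0)
    (hw_eig : ∀ j : Fin (n - q), S.mulVec (w j) = (eigJ S (q + (j : ℕ) + 1) : ℂ) • w j)
    (P : Matrix (Fin q) (Fin m) ℂ) (hP : P = Matrix.of fun j i => star (u j i))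
    (Pt : Matrix (Fin q) (Fin n) ℂ)
    (hPt : Pt = Matrix.of fun j (i : Fin n) =>
      if h : (i : ℕ) < m then P j ⟨(i : ℕ), h⟩ else 0)
    (Q : Matrix (Fin (n - q)) (Fin n) ℂ)
    (hQ : Q = Matrix.of fun j i => star (w j i))
    (C : Matrix (Fin q) (Fin q) ℂ) (hC : C * Cᴴ = 1)
    (R : Matrix (Fin q) (Fin n) ℂ)
    (hR : R = C * Matrix.diagonal
        (fun j : Fin q => (((Real.sqrt (eigJ Sm ((j : ℕ) + 1)))⁻¹ : ℝ) : ℂ)) * Pt * Qᴴ * Q) :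
    ∀ j : ℕ, 1 ≤ j → j ≤ q →
      eigJ (R * S * Rᴴ) j ≤ eigJ S (q + 1) / eigJ Sm q := by
  intro j hj1 hjq
  have hSmH : Sm.IsHermitian := hSm ▸ hS.1.submatrix _
  have hPt1 : Pt * Ptᴴ = 1 := by
    rw [show Pt = padZeroCols n P from hPt, padZeroCols_mul_conjTranspose hmn, hP,
      of_star_mul_conjTranspose_eq_one hu_orth]
  have hQ1 : Q * Qᴴ = 1 := by rw [hQ, of_star_mul_conjTranspose_eq_one hw_orth]
  have hQSQ : Q * S * Qᴴ ≤ eigJ S (q + 1) • 1 := by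
    rw [hQ, of_star_mul_mul_conjTranspose_eq_diagonal hw_orth hw_eig]
    exact diagonal_ofReal_le_smul_one fun i => eigJ_antitone hS.1 (by omega) (by omega) (by omega)
  have hΛ : ∀ i : Fin q, ((eigJ Sm ((i : ℕ) + 1)).sqrt⁻¹) ^ 2 ≤ (eigJ Sm q)⁻¹ := fun i => by
    have hμi := eigJ_antitone hSmH (by omega) (Nat.succ_le_of_lt i.2) hqm
    rw [inv_pow, Real.sq_sqrt (hμq.trans_le hμi).le]
    exact inv_anti₀ hμq hμi
  refine eigJ_le_of_le_smul_one (isHermitian_mul_mul_conjTranspose R hS.1) ?_ hj1 hjq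
  rw [hR, div_eq_mul_inv]
  exact mul_mul_conjTranspose_le_smul_one hC
    ((diagonal_ofReal_mul_conjTranspose _).trans_le (diagonal_ofReal_le_smul_one hΛ))
    hPt1 hQ1 (eigJ_nonneg hS (by omega) hqn) hQSQ

/-- with `S` an n×n Hermitian PSD matrix, `Sm` its top-left m×m submatrix,
`P` the q×m matrix of (conjugate-transposed) orthonormal eigenvectors of `Sm` for its `q`
largest eigenvalues (padded with zeros to `Pt`), `Λ` the diagonal of those eigenvalues,
`Q` the (n−q)×n matrix of orthonormal eigenvectors of `S` for its n−q smallest eigenvalues,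
`C` a q×q matrix with `C Cᴴ = 1`, and `R = C Λ^{-1/2} Pt Qᴴ Q`:
every eigenvalue of `R S Rᴴ` (in particular the largest) is at most
`λ_{q+1}(S) / μ_q(Sm)`. -/
theorem stmt_13 {q m n : ℕ} (hq : 0 < q) (hqm : q ≤ m) (hmn : m ≤ n) (hqn : q < n)
    (S : Matrix (Fin n) (Fin n) ℂ) (hS : S.PosSemidef)
    (Sm : Matrix (Fin m) (Fin m) ℂ)
    (hSm : Sm = S.submatrix (Fin.castLE hmn) (Fin.castLE hmn))
    (hμq : 0 < eigJ Sm q)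
    (u : Fin q → Fin m → ℂ)
    (hu_orth : ∀ j k, star (u j) ⬝ᵥ u k = if j = k then 1 else 0)
    (hu_eig : ∀ j : Fin q, Sm.mulVec (u j) = (eigJ Sm ((j : ℕ) + 1) : ℂ) • u j)
    (w : Fin (n - q) → Fin n → ℂ)
    (hw_orth : ∀ j k, star (w j) ⬝ᵥ w k = if j = k then 1 else 0)
    (hw_eig : ∀ j : Fin (n - q), S.mulVec (w j) = (eigJ S (q + (j : ℕ) + 1) : ℂ) • w j)
    (P : Matrix (Fin q) (Fin m) ℂ) (hP : P = Matrix.of fun j i => star (u j i))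
    (Pt : Matrix (Fin q) (Fin n) ℂ)
    (hPt : Pt = Matrix.of fun j (i : Fin n) =>
      if h : (i : ℕ) < m then P j ⟨(i : ℕ), h⟩ else 0)
    (Q : Matrix (Fin (n - q)) (Fin n) ℂ)
    (hQ : Q = Matrix.of fun j i => star (w j i))
    (C : Matrix (Fin q) (Fin q) ℂ) (hC : C * Cᴴ = 1)
    (R : Matrix (Fin q) (Fin n) ℂ)
    (hR : R = C * Matrix.diagonal
        (fun j : Fin q => (((Real.sqrt (eigJ Sm ((j : ℕ) + 1)))⁻¹ : ℝ) : ℂ)) * Pt * Qᴴ * Q) :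
    ∀ j : ℕ, 1 ≤ j → j ≤ q →
      eigJ (R * S * Rᴴ) j ≤ eigJ S (q + 1) / eigJ Sm q :=
  stmt_13_general hqm hmn hqn S hS Sm hSm hμq u hu_orth w hw_orth hw_eig P hP Pt hPt Q hQ C hC R hR
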